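/- arXiv:2109.13361 — 2 statements merged into one kernel-verified Lean document; each statement's English description precedes it below -/
import Mathlib

section
/- Let A be the incidence matrix of a finite bipartite graph, S ≥ 0 an integer, and E_tot ∈ {0,1,...,S+1}^{|E|} with A·E_tot ≤ (S+1)·1. Let U = {v ∈ V : (A·E_tot)_v = S+1}. Then there exists E ∈ {0,1}^{|E|} with E ≤ E_tot componentwise, A_U·E = 1 on rows indexed by U, and A·E ≤ 1 componentwise. -/
open Finset


lemma transport {α β : Type*} [Fintype α] [Fintype β] :
    ∀ (N : ℕ) (f : α → ℕ) (g : β → ℕ), ∑ a, f a = N → ∑ b, g b = N →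
    ∃ D : α → β → ℕ, (∀ a, ∑ b, D a b = f a) ∧ (∀ b, ∑ a, D a b = g b) := by
  classical
  intro N
  induction N with
  | zero =>
    intro f g hf hg
    refine ⟨fun _ _ => 0, fun a => ?_, fun b => ?_⟩
    · rw [Finset.sum_eq_zero_iff.mp hf a (mem_univ a)]; simp
    · rw [Finset.sum_eq_zero_iff.mp hg b (mem_univ b)]; simp
  | succ N ih =>
    intro f g hf hg
    have ha : ∃ a, 0 < f a := by
      by_contra h
      push_neg at h
      have : ∑ a, f a = 0 := Finset.sum_eq_zero (fun a _ => Nat.le_zero.mp (h a))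
      omega
    have hb : ∃ b, 0 < g b := by
      by_contra h
      push_neg at h
      have : ∑ b, g b = 0 := Finset.sum_eq_zero (fun b _ => Nat.le_zero.mp (h b))
      omega
    obtain ⟨a₀, ha₀⟩ := ha
    obtain ⟨b₀, hb₀⟩ := hb
    have hfa : ∑ a, Function.update f a₀ (f a₀ - 1) a = N := by
      rw [Finset.sum_update_of_mem (mem_univ a₀), Finset.sdiff_singleton_eq_erase]
      rw [← Finset.add_sum_erase _ f (mem_univ a₀)] at hf
      omega
    have hgb : ∑ b, Function.update g b₀ (g b₀ - 1) b = N := by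
      rw [Finset.sum_update_of_mem (mem_univ b₀), Finset.sdiff_singleton_eq_erase]
      rw [← Finset.add_sum_erase _ g (mem_univ b₀)] at hg
      omega
    obtain ⟨D', hD1, hD2⟩ := ih _ _ hfa hgb
    refine ⟨fun a b => D' a b + if a = a₀ ∧ b = b₀ then 1 else 0, fun a => ?_, fun b => ?_⟩
    · rw [Finset.sum_add_distrib, hD1]
      by_cases h : a = a₀ <;> simp [h, Function.update] <;> omega
    · rw [Finset.sum_add_distrib, hD2]
      by_cases h : b = b₀ <;> simp [h, Function.update] <;> omega




/-- Induction step of the decomposition: if `Etot ∈ {0,…,S+1}^E` with `A·Etot ≤ (S+1)·1`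
and `U = {v : (A·Etot)_v = S+1}`, there is `E ∈ {0,1}^E` with `E ≤ Etot`,
`A_U · E = 1` on rows of `U`, and `A · E ≤ 1` componentwise. -/
theorem stmt_4 {V E : Type*} [Fintype V] [Fintype E]
    (A : Matrix V E ℕ) (side : V → Bool)
    (h01 : ∀ v e, A v e = 0 ∨ A v e = 1)
    (hbip : ∀ e, (∃! v, side v = true ∧ A v e = 1) ∧ (∃! v, side v = false ∧ A v e = 1))
    (S : ℕ) (Etot : E → ℕ)
    (hE : ∀ e, Etot e ≤ S + 1)
    (hcap : ∀ v, ∑ e, A v e * Etot e ≤ S + 1) :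
    ∃ Ee : E → ℕ,
      (∀ e, Ee e ≤ 1) ∧
      (∀ e, Ee e ≤ Etot e) ∧
      (∀ v, ∑ e, A v e * Etot e = S + 1 → ∑ e, A v e * Ee e = 1) ∧
      (∀ v, ∑ e, A v e * Ee e ≤ 1) := by
  classical
  set n := S + 1 with hn
  -- endpoints
  choose l hl using fun e => (hbip e).1
  choose r hr using fun e => (hbip e).2
  have hlside : ∀ e, side (l e) = true := fun e => (hl e).1.1
  have hrside : ∀ e, side (r e) = false := fun e => (hr e).1.1
  have hlA : ∀ e, A (l e) e = 1 := fun e => (hl e).1.2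
  have hrA : ∀ e, A (r e) e = 1 := fun e => (hr e).1.2
  have hAiffL : ∀ v e, side v = true → (A v e = 1 ↔ l e = v) := by
    intro v e hv
    constructor
    · intro h; exact ((hl e).2 v ⟨hv, h⟩).symm
    · rintro rfl; exact hlA e
  have hAiffR : ∀ v e, side v = false → (A v e = 1 ↔ r e = v) := by
    intro v e hv
    constructor
    · intro h; exact ((hr e).2 v ⟨hv, h⟩).symm
    · rintro rfl; exact hrA e
  have hA1 : ∀ v e, A v e = 1 → l e = v ∨ r e = v := by
    intro v e h
    cases hv : side v with
    | true => exact Or.inl ((hAiffL v e hv).mp h)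
    | false => exact Or.inr ((hAiffR v e hv).mp h)
  set load : V → ℕ := fun v => ∑ e, A v e * Etot e with hload
  -- the multiplicity matrix
  set m : V → V → ℕ := fun a b => ∑ e, if l e = a ∧ r e = b then Etot e else 0 with hm
  have hterm_l : ∀ a e, side a = true → A a e * Etot e = if l e = a then Etot e else 0 := by
    intro a e ha
    by_cases h : l e = a
    · simp [h, (hAiffL a e ha).mpr h]
    · have : A a e = 0 := by
        rcases h01 a e with h0 | h1
        · exact h0
        · exact absurd ((hAiffL a e ha).mp h1) h
      simp [h, this]
  have hterm_r : ∀ b e, side b = false → A b e * Etot e = if r e = b then Etot e else 0 := by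
    intro b e hb
    by_cases h : r e = b
    · simp [h, (hAiffR b e hb).mpr h]
    · have : A b e = 0 := by
        rcases h01 b e with h0 | h1
        · exact h0
        · exact absurd ((hAiffR b e hb).mp h1) h
      simp [h, this]
  have mrow : ∀ a, side a = true → ∑ b, m a b = load a := by
    intro a ha
    rw [hm, Finset.sum_comm]
    refine Finset.sum_congr rfl fun e _ => ?_
    rw [hterm_l a e ha]
    by_cases h : l e = a <;> simp [h]
  have mcol : ∀ b, side b = false → ∑ a, m a b = load b := by
    intro b hb
    rw [hm]
    rw [Finset.sum_comm]
    refine Finset.sum_congr rfl fun e _ => ?_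
    rw [hterm_r b e hb]
    by_cases h : r e = b <;> by_cases h' : l e = l e <;> simp [h]
  have mrow0 : ∀ a, side a = false → ∀ b, m a b = 0 := by
    intro a ha b
    refine Finset.sum_eq_zero fun e _ => ?_
    have hne : l e ≠ a := by
      intro h; rw [← h, hlside e] at ha; simp at ha
    simp [hne]
  have mcol0 : ∀ b, side b = true → ∀ a, m a b = 0 := by
    intro b hb a
    refine Finset.sum_eq_zero fun e _ => ?_
    have hne : r e ≠ b := by
      intro h; rw [← h, hrside e] at hb; simp at hb
    simp [hne]
  -- total
  set T : ℕ := ∑ e, Etot e with hT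
  have sumL : ∑ a, (if side a = true then load a else 0) = T := by
    have : ∀ a, (if side a = true then load a else 0)
        = ∑ e, (if side a = true then A a e * Etot e else 0) := by
      intro a; by_cases h : side a = true <;> simp [h, hload]
    rw [Finset.sum_congr rfl (fun a _ => this a), Finset.sum_comm]
    refine Finset.sum_congr rfl fun e _ => ?_
    have : ∀ a, (if side a = true then A a e * Etot e else 0)
        = (if a = l e then Etot e else 0) := by
      intro a
      by_cases h : a = l e
      · simp [h, hlside e, hlA e]
      · by_cases ha : side a = true
        · rw [hterm_l a e ha]
          simp [ha, h, Ne.symm h]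
        · simp [h, ha]
    rw [Finset.sum_congr rfl (fun a _ => this a), Finset.sum_ite_eq' univ (l e) (fun _ => Etot e)]
    simp
  have sumR : ∑ b, (if side b = false then load b else 0) = T := by
    have : ∀ b, (if side b = false then load b else 0)
        = ∑ e, (if side b = false then A b e * Etot e else 0) := by
      intro b; by_cases h : side b = false <;> simp [h, hload]
    rw [Finset.sum_congr rfl (fun b _ => this b), Finset.sum_comm]
    refine Finset.sum_congr rfl fun e _ => ?_
    have : ∀ b, (if side b = false then A b e * Etot e else 0)
        = (if b = r e then Etot e else 0) := by
      intro b
      by_cases h : b = r e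
      · simp [h, hrside e, hrA e]
      · by_cases hb : side b = false
        · rw [hterm_r b e hb]
          simp [hb, h, Ne.symm h]
        · simp [h, hb]
    rw [Finset.sum_congr rfl (fun b _ => this b), Finset.sum_ite_eq' univ (r e) (fun _ => Etot e)]
    simp
  -- deficiencies
  set frow : V → ℕ := fun a => if side a = true then n - load a else n with hfrow
  set gcol : V → ℕ := fun b => if side b = false then n - load b else n with hgcol
  have hcapl : ∀ v, load v ≤ n := hcap
  have h1 : ∑ a, frow a + T = Fintype.card V * n := by
    rw [← sumL, ← Finset.sum_add_distrib]
    rw [Finset.sum_congr rfl (fun a _ => show frow a + (if side a = true then load a else 0) = n by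
      have := hcapl a
      by_cases h : side a = true <;> simp [hfrow, h] <;> omega)]
    simp [Finset.sum_const]
  have h2 : ∑ b, gcol b + T = Fintype.card V * n := by
    rw [← sumR, ← Finset.sum_add_distrib]
    rw [Finset.sum_congr rfl (fun b _ => show gcol b + (if side b = false then load b else 0) = n by
      have := hcapl b
      by_cases h : side b = false <;> simp [hgcol, h] <;> omega)]
    simp [Finset.sum_const]
  have hsum : ∑ b, gcol b = ∑ a, frow a := by omega
  obtain ⟨D, hD1, hD2⟩ := transport (∑ a, frow a) frow gcol rfl hsum
  set W : V → V → ℕ := fun a b => m a b + D a b with hW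
  have hWrow : ∀ a, ∑ b, W a b = n := by
    intro a
    rw [hW]
    rw [Finset.sum_add_distrib, hD1]
    by_cases h : side a = true
    · rw [mrow a h]
      simp only [hfrow, h, if_true]
      exact Nat.add_sub_cancel' (hcapl a)
    · rw [Finset.sum_eq_zero (fun b _ => mrow0 a (by simpa using h) b)]
      simp [hfrow, h]
  have hWcol : ∀ b, ∑ a, W a b = n := by
    intro b
    rw [hW]
    rw [Finset.sum_add_distrib, hD2]
    by_cases h : side b = false
    · rw [mcol b h]
      simp only [hgcol, h, if_true]
      exact Nat.add_sub_cancel' (hcapl b)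
    · rw [Finset.sum_eq_zero (fun a _ => mcol0 b (by simpa using h) a)]
      simp [hgcol, h]
  -- Hall's condition
  have hall : ∀ s : Finset V,
      s.card ≤ (s.biUnion (fun a => univ.filter (fun b => 1 ≤ W a b))).card := by
    intro s
    set N := s.biUnion (fun a => univ.filter (fun b => 1 ≤ W a b)) with hN
    have e1 : ∀ a ∈ s, ∑ b, W a b = ∑ b ∈ N, W a b := by
      intro a ha
      refine (Finset.sum_subset (Finset.subset_univ N) ?_).symm
      intro b _ hb
      by_contra hc
      exact hb (Finset.mem_biUnion.mpr ⟨a, ha, Finset.mem_filter.mpr ⟨mem_univ b, by omega⟩⟩)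
    have e2 : s.card * n = ∑ a ∈ s, ∑ b ∈ N, W a b := by
      rw [← Finset.sum_congr rfl e1, Finset.sum_congr rfl (fun a _ => hWrow a)]
      simp [Finset.sum_const, mul_comm]
    have e3 : ∑ a ∈ s, ∑ b ∈ N, W a b ≤ N.card * n := by
      rw [Finset.sum_comm]
      calc ∑ b ∈ N, ∑ a ∈ s, W a b ≤ ∑ b ∈ N, ∑ a, W a b := by
            refine Finset.sum_le_sum fun b _ => ?_
            exact Finset.sum_le_sum_of_subset (Finset.subset_univ s)
        _ = N.card * n := by
            rw [Finset.sum_congr rfl (fun b _ => hWcol b)]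
            simp [Finset.sum_const, mul_comm]
    have hn1 : 1 ≤ n := by omega
    have := e2 ▸ e3
    exact Nat.le_of_mul_le_mul_right (by omega) (by omega : 0 < n)
  obtain ⟨f, hfinj, hf⟩ :=
    (Finset.all_card_le_biUnion_card_iff_exists_injective
      (fun a => univ.filter (fun b => 1 ≤ W a b))).mp hall
  have hfW : ∀ a, 1 ≤ W a (f a) := fun a => (Finset.mem_filter.mp (hf a)).2
  have hfsurj : Function.Surjective f := Finite.surjective_of_injective hfinj
  -- picking actual edges
  have hmP : ∀ a b, 1 ≤ m a b → ∃ e, l e = a ∧ r e = b ∧ 1 ≤ Etot e := by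
    intro a b hm1
    have hne : m a b ≠ 0 := by omega
    obtain ⟨e, _, he⟩ := Finset.exists_ne_zero_of_sum_ne_zero hne
    by_cases h : l e = a ∧ r e = b
    · exact ⟨e, h.1, h.2, by simp [h] at he; omega⟩
    · simp [h] at he
  set pick : V → Option E := fun a =>
    if h : ∃ e, l e = a ∧ r e = f a ∧ 1 ≤ Etot e then some h.choose else none with hpick
  have hpickP : ∀ a e, pick a = some e → l e = a ∧ r e = f a ∧ 1 ≤ Etot e := by
    intro a e h
    simp only [hpick] at h
    split at h
    · next hex => rw [Option.some_inj] at h; exact h ▸ hex.choose_spec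
    · exact absurd h (by simp)
  have hpick_ex : ∀ a, 1 ≤ m a (f a) → ∃ e, pick a = some e := by
    intro a h
    have hx := hmP a (f a) h
    refine ⟨hx.choose, ?_⟩
    simp only [hpick]
    exact dif_pos hx
  set Ee : E → ℕ := fun e => if ∃ a, pick a = some e then 1 else 0 with hEe
  have hEe01 : ∀ e, Ee e ≤ 1 := by intro e; simp only [hEe]; split <;> simp
  have hEele : ∀ e, Ee e ≤ Etot e := by
    intro e
    simp only [hEe]
    split
    · next h => obtain ⟨a, ha⟩ := h; exact (hpickP a e ha).2.2
    · simp
  -- saturation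
  have hsat : ∀ v, load v = n → ∃ e, A v e = 1 ∧ Ee e = 1 := by
    intro v hv
    cases hside : side v with
    | true =>
      have hfr : frow v = 0 := by simp [hfrow, hside, hv]
      have hDv : D v (f v) = 0 :=
        Finset.sum_eq_zero_iff.mp (by rw [hD1 v, hfr]) (f v) (mem_univ (f v))
      have hm1 : 1 ≤ m v (f v) := by
        have h2 := hfW v
        have h3 : W v (f v) = m v (f v) + D v (f v) := rfl
        omega
      obtain ⟨e, he⟩ := hpick_ex v hm1
      obtain ⟨hle, _, _⟩ := hpickP v e he
      exact ⟨e, hle ▸ hlA e, by simp only [hEe]; exact if_pos ⟨v, he⟩⟩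
    | false =>
      have hgc : gcol v = 0 := by simp [hgcol, hside, hv]
      obtain ⟨a, rfl⟩ := hfsurj v
      have hDv : D a (f a) = 0 :=
        Finset.sum_eq_zero_iff.mp (by rw [hD2 (f a), hgc]) a (mem_univ a)
      have hm1 : 1 ≤ m a (f a) := by
        have h2 := hfW a
        have h3 : W a (f a) = m a (f a) + D a (f a) := rfl
        omega
      obtain ⟨e, he⟩ := hpick_ex a hm1
      obtain ⟨_, hre, _⟩ := hpickP a e he
      exact ⟨e, hre ▸ hrA e, by simp only [hEe]; exact if_pos ⟨a, he⟩⟩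
  -- upper bound
  have hub : ∀ v, ∑ e, A v e * Ee e ≤ 1 := by
    intro v
    have key : ∀ e ∈ univ.filter (fun e => A v e * Ee e ≠ 0),
        ∀ e' ∈ univ.filter (fun e => A v e * Ee e ≠ 0), e = e' := by
      intro e he e' he'
      simp only [Finset.mem_filter] at he he'
      have hA : A v e = 1 := by
        rcases h01 v e with h | h
        · exact absurd (by simp [h] : A v e * Ee e = 0) he.2
        · exact h
      have hA' : A v e' = 1 := by
        rcases h01 v e' with h | h
        · exact absurd (by simp [h] : A v e' * Ee e' = 0) he'.2
        · exact h
      have hEne : Ee e ≠ 0 := fun h => he.2 (by simp [h])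
      have hEne' : Ee e' ≠ 0 := fun h => he'.2 (by simp [h])
      simp only [hEe] at hEne hEne'
      have hex : ∃ a, pick a = some e := by by_contra h; simp [h] at hEne
      have hex' : ∃ a, pick a = some e' := by by_contra h; simp [h] at hEne'
      obtain ⟨a, ha⟩ := hex
      obtain ⟨a', ha'⟩ := hex'
      obtain ⟨hle, hre, _⟩ := hpickP a e ha
      obtain ⟨hle', hre', _⟩ := hpickP a' e' ha'
      rcases hA1 v e hA with h | h <;> rcases hA1 v e' hA' with h' | h'
      · have : a = a' := by rw [← hle, ← hle', h, h']
        subst this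
        rw [ha] at ha'
        exact Option.some_inj.mp ha'
      · exfalso
        have t1 := hlside e
        have t2 := hrside e'
        rw [h] at t1
        rw [h'] at t2
        rw [t1] at t2
        exact Bool.noConfusion t2
      · exfalso
        have t1 := hlside e'
        have t2 := hrside e
        rw [h'] at t1
        rw [h] at t2
        rw [t1] at t2
        exact Bool.noConfusion t2
      · have : a = a' := hfinj (by rw [← hre, ← hre', h, h'])
        subst this
        rw [ha] at ha'
        exact Option.some_inj.mp ha'
    calc ∑ e, A v e * Ee e
        = ∑ e ∈ univ.filter (fun e => A v e * Ee e ≠ 0), A v e * Ee e :=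
          (Finset.sum_filter_ne_zero univ).symm
      _ ≤ ∑ e ∈ univ.filter (fun e => A v e * Ee e ≠ 0), 1 := by
          refine Finset.sum_le_sum fun e _ => ?_
          have h1 : A v e ≤ 1 := by rcases h01 v e with h | h <;> omega
          have h2 : Ee e ≤ 1 := hEe01 e
          calc A v e * Ee e ≤ 1 * 1 := Nat.mul_le_mul h1 h2
            _ = 1 := by norm_num
      _ = (univ.filter (fun e => A v e * Ee e ≠ 0)).card := by simp
      _ ≤ 1 := Finset.card_le_one.mpr key
  refine ⟨Ee, hEe01, hEele, ?_, hub⟩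
  intro v hv
  obtain ⟨e, hAe, hEee⟩ := hsat v hv
  have hge : 1 ≤ ∑ e, A v e * Ee e := by
    have hterm : 1 ≤ A v e * Ee e := by rw [hAe, hEee]
    exact le_trans hterm (Finset.single_le_sum (f := fun e => A v e * Ee e)
      (fun e _ => Nat.zero_le _) (mem_univ e))
  have := hub v
  omega
end

section
/- Let A be a totally unimodular matrix and b an integer vector such that the polytope P = {x : Ax ≤ b, 0 ≤ x ≤ 1} is nonempty. Then every vertex (extreme point) of P has all integer coordinates, and in particular P contains an integer point. -/
open Matrix

lemma tu_aux {m n : ℕ} (A : Matrix (Fin m) (Fin n) ℤ)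
    (hTU : ∀ (k : ℕ) (f : Fin k → Fin m) (g : Fin k → Fin n),
      Function.Injective f → Function.Injective g →
      (A.submatrix f g).det ∈ ({-1, 0, 1} : Set ℤ)) :
    ∀ (k : ℕ) (r : Fin k → (Fin n → ℤ)) (g : Fin k → Fin n),
      Function.Injective g →
      (∀ i, (∃ i', r i = A i') ∨ (∃ j, r i = Pi.single j 1) ∨ (∃ j, r i = -Pi.single j 1)) →
      (Matrix.of fun i l => r i (g l)).det ∈ ({-1, 0, 1} : Set ℤ) := by
  intro k
  induction k with
  | zero =>
    intro r g hg hr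
    simp [Matrix.det_fin_zero]
  | succ k ih =>
    intro r g hg hr
    by_cases hA : ∀ i, ∃ i', r i = A i'
    · choose f hf using hA
      by_cases hfinj : Function.Injective f
      · have hEq : (Matrix.of fun i l => r i (g l)) = A.submatrix f g := by
          ext i l
          simp [hf i, Matrix.submatrix_apply]
        rw [hEq]
        exact hTU _ f g hfinj hg
      · rw [Function.not_injective_iff] at hfinj
        obtain ⟨i1, i2, heq, hne⟩ := hfinj
        have h0 : (Matrix.of fun i l => r i (g l)).det = 0 := by
          apply Matrix.det_zero_of_row_eq hne
          funext l
          simp [hf i1, hf i2, heq]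
        rw [h0]; simp
    · push_neg at hA
      obtain ⟨i0, hi0⟩ := hA
      have hsingle : ∃ (s : ℤ) (j : Fin n), (s = 1 ∨ s = -1) ∧ r i0 = s • Pi.single j 1 := by
        rcases hr i0 with h | ⟨j, hj⟩ | ⟨j, hj⟩
        · obtain ⟨i', hi'⟩ := h; exact absurd hi' (hi0 i')
        · exact ⟨1, j, Or.inl rfl, by simpa using hj⟩
        · exact ⟨-1, j, Or.inr rfl, by simpa [neg_smul] using hj⟩
      obtain ⟨s, j, hs, hrj⟩ := hsingle
      by_cases hjg : ∃ l0, g l0 = j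
      · obtain ⟨l0, hl0⟩ := hjg
        rw [Matrix.det_succ_row _ i0]
        have hrow : ∀ l, (Matrix.of fun i l => r i (g l)) i0 l = if l = l0 then s else 0 := by
          intro l
          simp only [Matrix.of_apply, hrj, Pi.smul_apply, Pi.single_apply, smul_eq_mul]
          by_cases h : l = l0
          · simp [h, hl0]
          · have : g l ≠ j := by
              rw [← hl0]; exact fun hc => h (hg hc)
            simp [h, this]
        rw [Finset.sum_eq_single l0]
        · have hsub : ((Matrix.of fun i l => r i (g l)).submatrix i0.succAbove l0.succAbove).det
              ∈ ({-1, 0, 1} : Set ℤ) := by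
            have := ih (fun i => r (i0.succAbove i)) (fun l => g (l0.succAbove l))
              (hg.comp (Fin.succAbove_right_injective))
              (fun i => hr (i0.succAbove i))
            exact this
          rw [hrow l0]
          simp only [if_pos rfl]
          simp only [Set.mem_insert_iff, Set.mem_singleton_iff] at hsub ⊢
          have hpow : ((-1:ℤ))^((i0:ℕ)+(l0:ℕ)) = 1 ∨ ((-1:ℤ))^((i0:ℕ)+(l0:ℕ)) = -1 := by
            rcases Nat.even_or_odd ((i0:ℕ)+(l0:ℕ)) with h | h
            · exact Or.inl h.neg_one_pow
            · exact Or.inr h.neg_one_pow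
          rcases hpow with hp | hp <;> rcases hs with hs | hs <;>
            rcases hsub with h | h | h <;> rw [hp, hs, h] <;> norm_num
        · intro l _ hl
          rw [hrow l, if_neg hl]
          ring
        · intro h
          exact absurd (Finset.mem_univ l0) h
      · push_neg at hjg
        have h0 : (Matrix.of fun i l => r i (g l)).det = 0 := by
          apply Matrix.det_eq_zero_of_row_eq_zero i0
          intro l
          simp [hrj, Pi.single_apply, hjg l]
        rw [h0]; simp

lemma tight_span {n : ℕ} {ι : Type*} [Fintype ι] (a : ι → (Fin n → ℝ)) (β : ι → ℝ)
    {x : Fin n → ℝ}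
    (hx : x ∈ Set.extremePoints ℝ {x : Fin n → ℝ | ∀ i, a i ⬝ᵥ x ≤ β i}) :
    Submodule.span ℝ (Set.range fun i : {i // a i ⬝ᵥ x = β i} => a i.1) = ⊤ := by
  classical
  by_contra hne
  obtain ⟨φ, hφ0, hφ⟩ := Submodule.exists_dual_map_eq_bot_of_lt_top (lt_top_iff_ne_top.2 hne)
    inferInstance
  set y : Fin n → ℝ := fun j => φ (Pi.single j 1) with hy
  have hφv : ∀ v : Fin n → ℝ, φ v = v ⬝ᵥ y := by
    intro v
    have hv : v = ∑ j, (v j) • (Pi.single j 1 : Fin n → ℝ) := by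
      funext l
      simp [Finset.sum_apply, Pi.single_apply]
    conv_lhs => rw [hv]
    rw [map_sum]
    simp [dotProduct, hy, mul_comm]
  have hy0 : y ≠ 0 := by
    intro h
    apply hφ0
    ext v
    exact congrFun h v
  have htight : ∀ i, a i ⬝ᵥ x = β i → a i ⬝ᵥ y = 0 := by
    intro i hi
    have : φ (a i) ∈ Submodule.map φ (Submodule.span ℝ
        (Set.range fun i : {i // a i ⬝ᵥ x = β i} => a i.1)) :=
      Submodule.mem_map_of_mem (Submodule.subset_span ⟨⟨i, hi⟩, rfl⟩)
    rw [hφ] at this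
    rw [← hφv]
    simpa using this
  -- epsilon
  set S : Finset ι := Finset.univ.filter (fun i => a i ⬝ᵥ x ≠ β i) with hS
  set t : ι → ℝ := fun i => (β i - a i ⬝ᵥ x) / (|a i ⬝ᵥ y| + 1) with ht
  set ε : ℝ := if h : S.Nonempty then S.inf' h t else 1 with hε
  have hxP := hx.1
  have htpos : ∀ i ∈ S, 0 < t i := by
    intro i hi
    rw [hS, Finset.mem_filter] at hi
    have h1 : a i ⬝ᵥ x < β i := lt_of_le_of_ne (hxP i) hi.2
    have h2 : (0:ℝ) < |a i ⬝ᵥ y| + 1 := by positivity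
    exact div_pos (by linarith) h2
  have hεpos : 0 < ε := by
    rw [hε]
    split
    · rename_i h
      rw [Finset.lt_inf'_iff]
      exact htpos
    · norm_num
  have hmem : ∀ s : ℝ, |s| ≤ ε → x + s • y ∈ {x : Fin n → ℝ | ∀ i, a i ⬝ᵥ x ≤ β i} := by
    intro s hs i
    have hdot : a i ⬝ᵥ (x + s • y) = a i ⬝ᵥ x + s * (a i ⬝ᵥ y) := by
      simp [dotProduct_add, dotProduct_smul, smul_eq_mul]
    rw [Set.mem_setOf_eq] at *
    by_cases hi : a i ⬝ᵥ x = β i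
    · rw [hdot, htight i hi, hi]; simp
    · have hiS : i ∈ S := by rw [hS, Finset.mem_filter]; exact ⟨Finset.mem_univ i, hi⟩
      have hεt : ε ≤ t i := by
        rw [hε]
        split
        · exact Finset.inf'_le _ hiS
        · rename_i h
          exact absurd ⟨i, hiS⟩ h
      have h2 : (0:ℝ) < |a i ⬝ᵥ y| + 1 := by positivity
      have hb : s * (a i ⬝ᵥ y) ≤ |s| * |a i ⬝ᵥ y| := by
        calc s * (a i ⬝ᵥ y) ≤ |s * (a i ⬝ᵥ y)| := le_abs_self _
        _ = |s| * |a i ⬝ᵥ y| := abs_mul _ _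
      have hc : |s| * |a i ⬝ᵥ y| ≤ t i * |a i ⬝ᵥ y| :=
        mul_le_mul_of_nonneg_right (le_trans hs hεt) (abs_nonneg _)
      have hd : t i * |a i ⬝ᵥ y| < β i - a i ⬝ᵥ x := by
        rw [ht]
        have h1 : a i ⬝ᵥ x < β i := lt_of_le_of_ne (hxP i) hi
        rw [div_mul_eq_mul_div, div_lt_iff₀ h2]
        nlinarith [abs_nonneg (a i ⬝ᵥ y)]
      rw [hdot]
      linarith
  have h1 := hmem ε (by rw [abs_of_pos hεpos])
  have h2 := hmem (-ε) (by rw [abs_neg, abs_of_pos hεpos])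
  have hseg : x ∈ openSegment ℝ (x + (-ε) • y) (x + ε • y) := by
    refine ⟨1/2, 1/2, by norm_num, by norm_num, by norm_num, ?_⟩
    module
  have := hx.2 h1 h2 (by rw [openSegment_symm]; exact hseg)
  have : ε • y = 0 := by
    have h := congrArg (fun z => z - x) this
    simpa using h
  rcases smul_eq_zero.1 this with h | h
  · exact absurd h (ne_of_gt hεpos)
  · exact hy0 h

/-- If `A` is a totally unimodular integer matrix and `b` an integer vector such that
`P = {x : Ax ≤ b, 0 ≤ x ≤ 1}` is nonempty, then every extreme point (vertex) of `P`
is integral, and in particular `P` contains an integer point. -/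
theorem stmt_5 {m n : ℕ} (A : Matrix (Fin m) (Fin n) ℤ) (b : Fin m → ℤ)
    (hTU : ∀ (k : ℕ) (f : Fin k → Fin m) (g : Fin k → Fin n),
      Function.Injective f → Function.Injective g →
      (A.submatrix f g).det ∈ ({-1, 0, 1} : Set ℤ))
    (P : Set (Fin n → ℝ))
    (hP : P = {x | (∀ i, ∑ j, (A i j : ℝ) * x j ≤ (b i : ℝ)) ∧ ∀ j, 0 ≤ x j ∧ x j ≤ 1})
    (hne : P.Nonempty) :
    (∀ x ∈ Set.extremePoints ℝ P, ∀ j, ∃ z : ℤ, x j = (z : ℝ)) ∧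
    (∃ x ∈ P, ∀ j, ∃ z : ℤ, x j = (z : ℝ)) := by
  classical
  -- the stacked constraint system
  set row : (Fin m ⊕ (Fin n ⊕ Fin n)) → (Fin n → ℤ) :=
    Sum.elim (fun i => A i) (Sum.elim (fun j0 => -Pi.single j0 1) (fun j0 => Pi.single j0 1))
    with hrow
  set rhs : (Fin m ⊕ (Fin n ⊕ Fin n)) → ℤ :=
    Sum.elim b (Sum.elim (fun _ => 0) (fun _ => 1)) with hrhs
  set a : (Fin m ⊕ (Fin n ⊕ Fin n)) → (Fin n → ℝ) := fun i j => ((row i j : ℤ) : ℝ) with ha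
  set β : (Fin m ⊕ (Fin n ⊕ Fin n)) → ℝ := fun i => ((rhs i : ℤ) : ℝ) with hβ
  have hsingle_cast : ∀ (j0 j : Fin n), (((Pi.single j0 1 : Fin n → ℤ) j : ℤ) : ℝ)
      = (Pi.single j0 1 : Fin n → ℝ) j := by
    intro j0 j
    simp [Pi.single_apply, apply_ite (fun z : ℤ => (z : ℝ))]
  have ha_inl : ∀ i, a (Sum.inl i) = fun j => (A i j : ℝ) := fun i => rfl
  have ha_inrl : ∀ j0, a (Sum.inr (Sum.inl j0)) = -(Pi.single j0 1 : Fin n → ℝ) := by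
    intro j0
    funext j
    simp only [ha, hrow, Sum.elim_inr, Sum.elim_inl, Pi.neg_apply, Int.cast_neg]
    rw [hsingle_cast]
  have ha_inrr : ∀ j0, a (Sum.inr (Sum.inr j0)) = (Pi.single j0 1 : Fin n → ℝ) := by
    intro j0
    funext j
    simp only [ha, hrow, Sum.elim_inr, Sum.elim_inr]
    rw [hsingle_cast]
  have hPeq : P = {x : Fin n → ℝ | ∀ i, a i ⬝ᵥ x ≤ β i} := by
    rw [hP]
    ext x
    simp only [Set.mem_setOf_eq]
    constructor
    · rintro ⟨h1, h2⟩ i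
      rcases i with i | j0 | j0
      · exact h1 i
      · rw [ha_inrl, neg_dotProduct, single_dotProduct, one_mul]
        simpa [hβ, hrhs] using (h2 j0).1
      · rw [ha_inrr, single_dotProduct, one_mul]
        simpa [hβ, hrhs] using (h2 j0).2
    · intro h
      refine ⟨fun i => h (Sum.inl i), fun j0 => ⟨?_, ?_⟩⟩
      · have := h (Sum.inr (Sum.inl j0))
        rw [ha_inrl, neg_dotProduct, single_dotProduct, one_mul] at this
        simpa [hβ, hrhs] using this
      · have := h (Sum.inr (Sum.inr j0))
        rw [ha_inrr, single_dotProduct, one_mul] at this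
        simpa [hβ, hrhs] using this
  have key : ∀ x ∈ Set.extremePoints ℝ P, ∀ j, ∃ z : ℤ, x j = (z : ℝ) := by
    intro x hx
    rw [hPeq] at hx
    have hspan := tight_span a β hx
    obtain ⟨s, hs_sub, hs_span, hs_li⟩ :=
      exists_linearIndependent ℝ (Set.range fun i : {i // a i ⬝ᵥ x = β i} => a i.1)
    rw [hspan] at hs_span
    let Bas : Module.Basis s ℝ (Fin n → ℝ) := Module.Basis.mk hs_li (by rw [Subtype.range_coe, hs_span])
    haveI : Fintype s := FiniteDimensional.fintypeBasisIndex Bas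
    have hcard : Fintype.card s = n := by
      have h1 := Module.finrank_eq_card_basis Bas
      rw [Module.finrank_pi ℝ] at h1
      simpa using h1.symm
    let e : Fin n ≃ s := (Fintype.equivFinOfCardEq hcard).symm
    have hidx : ∀ p : Fin n, ∃ i : {i // a i ⬝ᵥ x = β i}, a i.1 = (e p : Fin n → ℝ) := by
      intro p
      have : ((e p : Fin n → ℝ)) ∈ Set.range fun i : {i // a i ⬝ᵥ x = β i} => a i.1 :=
        hs_sub (e p).2
      obtain ⟨i, hi⟩ := this
      exact ⟨i, hi⟩
    choose idx hidx' using hidx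
    set B : Matrix (Fin n) (Fin n) ℤ := Matrix.of fun p l => row (idx p).1 l with hB
    have hBr : B.map (fun z : ℤ => (z : ℝ)) = Matrix.of fun p l => a (idx p).1 l := rfl
    -- rows of the real matrix are linearly independent
    have hli : LinearIndependent ℝ (fun p => (B.map (fun z : ℤ => (z : ℝ))) p) := by
      have h2 : (fun p => (B.map (fun z : ℤ => (z : ℝ))) p)
          = (fun v : s => (v : Fin n → ℝ)) ∘ e := by
        funext p
        rw [hBr]
        exact (hidx' p).trans rfl
      rw [h2]
      exact hs_li.comp e e.injective
    have hunit : IsUnit (B.map (fun z : ℤ => (z : ℝ))) :=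
      Matrix.linearIndependent_rows_iff_isUnit.1 hli
    have hdet_cast : (B.map (fun z : ℤ => (z : ℝ))).det = ((B.det : ℤ) : ℝ) := by
      have h := RingHom.map_det (Int.castRingHom ℝ) B
      simpa using h.symm
    have hdet_ne : B.det ≠ 0 := by
      intro h0
      have hu := (Matrix.isUnit_iff_isUnit_det _).1 hunit
      rw [hdet_cast, h0] at hu
      simp at hu
    have hdet_mem : B.det ∈ ({-1, 0, 1} : Set ℤ) := by
      apply tu_aux A hTU n (fun p => row (idx p).1) id Function.injective_id
      intro p
      rcases (idx p).1 with i | j0 | j0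
      · exact Or.inl ⟨i, rfl⟩
      · exact Or.inr (Or.inr ⟨j0, rfl⟩)
      · exact Or.inr (Or.inl ⟨j0, rfl⟩)
    have hdet_unit : IsUnit B.det := by
      rcases hdet_mem with h | h | h
      · rw [h]; exact isUnit_one.neg
      · exact absurd h hdet_ne
      · rw [h]; exact isUnit_one
    -- B⁻¹ over ℤ
    have hCB : B⁻¹ * B = 1 := Matrix.nonsing_inv_mul B hdet_unit
    set c : Fin n → ℤ := fun p => rhs (idx p).1 with hc
    have hBx : (B.map (fun z : ℤ => (z : ℝ))) *ᵥ x = fun p => ((c p : ℤ) : ℝ) := by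
      funext p
      have htight := (idx p).2
      calc ((B.map (fun z : ℤ => (z : ℝ))) *ᵥ x) p = a (idx p).1 ⬝ᵥ x := rfl
      _ = β (idx p).1 := htight
      _ = ((c p : ℤ) : ℝ) := rfl
    have hxeq : x = (B⁻¹.map (fun z : ℤ => (z : ℝ))) *ᵥ (fun p => ((c p : ℤ) : ℝ)) := by
      rw [← hBx, Matrix.mulVec_mulVec]
      have hmm : B⁻¹.map (fun z : ℤ => (z : ℝ)) * B.map (fun z : ℤ => (z : ℝ))
          = (1 : Matrix (Fin n) (Fin n) ℝ) := by
        have h2 := congrArg (fun M => RingHom.mapMatrix (Int.castRingHom ℝ) M) hCB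
        simp only [_root_.map_mul, _root_.map_one] at h2
        simpa [RingHom.mapMatrix_apply, Int.coe_castRingHom] using h2
      rw [hmm, Matrix.one_mulVec]
    intro j
    refine ⟨(B⁻¹ *ᵥ c) j, ?_⟩
    rw [hxeq]
    simp only [Matrix.mulVec, dotProduct, Matrix.map_apply, Matrix.mulVec]
    push_cast
    rfl
  refine ⟨key, ?_⟩
  -- existence of an extreme point: P is compact
  have hclosed : IsClosed P := by
    rw [hP]
    have hEq : {x : Fin n → ℝ | (∀ i, ∑ j, (A i j : ℝ) * x j ≤ (b i : ℝ)) ∧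
        ∀ j, 0 ≤ x j ∧ x j ≤ 1}
        = (⋂ i, {x : Fin n → ℝ | ∑ j, (A i j : ℝ) * x j ≤ (b i : ℝ)}) ∩
          ⋂ j, ({x : Fin n → ℝ | 0 ≤ x j} ∩ {x : Fin n → ℝ | x j ≤ 1}) := by
      ext x
      simp [forall_and]
    rw [hEq]
    refine IsClosed.inter (isClosed_iInter fun i => isClosed_le (by fun_prop) continuous_const)
      (isClosed_iInter fun j => IsClosed.inter
        (isClosed_le continuous_const (continuous_apply j))
        (isClosed_le (continuous_apply j) continuous_const))
  have hsub : P ⊆ Set.Icc (0 : Fin n → ℝ) 1 := by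
    rw [hP]
    intro x hx
    exact ⟨fun j => (hx.2 j).1, fun j => (hx.2 j).2⟩
  have hcomp : IsCompact P := IsCompact.of_isClosed_subset isCompact_Icc hclosed hsub
  obtain ⟨x, hx⟩ := hcomp.extremePoints_nonempty hne
  exact ⟨x, hx.1, key x hx⟩
end
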